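/- For any connected graph H on h vertices and any finite graph G, the number of graph homomorphisms from H to G is at most the number of homomorphisms from the star K_{1,h-1} to G, i.e. hom(H, G) ≤ Σ_{v ∈ V(G)} d_G(v)^{h-1}, where d_G(v) is the degree of v in G. -/
import Mathlib

open SimpleGraph

open Finset Function

section SidorenkoAux

open scoped Classical

variable {α β : Type*} [Fintype α] [Fintype β]

private lemma amgm_nat (a b : ℕ) : ∀ k : ℕ, (k+1) * (a^k * b) ≤ k * a^(k+1) + b^(k+1) := by
  intro k
  induction k with
  | zero => simp
  | succ k ih =>
    have step : a * b^(k+1) + a^(k+1) * b ≤ a * a^(k+1) + b * b^(k+1) := by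
      rcases le_total a b with hab | hab
      · have hA : a^(k+1) ≤ b^(k+1) := Nat.pow_le_pow_left hab _
        calc a * b^(k+1) + a^(k+1) * b = a * b^(k+1) + b * a^(k+1) := by ring
          _ ≤ a * a^(k+1) + b * b^(k+1) := mul_add_mul_le_mul_add_mul hab hA
      · have hA : b^(k+1) ≤ a^(k+1) := Nat.pow_le_pow_left hab _
        calc a * b^(k+1) + a^(k+1) * b = b * a^(k+1) + a * b^(k+1) := by ring
          _ ≤ b * b^(k+1) + a * a^(k+1) := mul_add_mul_le_mul_add_mul hab hA
          _ = a * a^(k+1) + b * b^(k+1) := by ring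
    have ihm : (k+1) * (a^k * b) * a ≤ (k * a^(k+1) + b^(k+1)) * a := Nat.mul_le_mul_right a ih
    calc (k+1+1) * (a^(k+1) * b)
        = (k+1) * (a^k * b) * a + a^(k+1) * b := by ring
      _ ≤ (k * a^(k+1) + b^(k+1)) * a + a^(k+1) * b := Nat.add_le_add_right ihm _
      _ = k * a^(k+1) * a + (a * b^(k+1) + a^(k+1) * b) := by ring
      _ ≤ k * a^(k+1) * a + (a * a^(k+1) + b * b^(k+1)) := Nat.add_le_add_left step _
      _ = (k+1) * a^(k+1+1) + b^(k+1+1) := by ring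

private lemma coord (u : α) (F : (α → β) → β → ℕ)
    (hF : ∀ (f : α → β) (b c : β), F (Function.update f u b) c = F f c) :
    (Fintype.card β) * ∑ f : α → β, F f (f u) = ∑ f : α → β, ∑ b : β, F f b := by
  set e := Equiv.funSplitAt u β with he
  have h1 : ∀ (b : β) (g : {j // j ≠ u} → β), (e.symm (b, g)) u = b := by
    intro b g; simp [he, Equiv.funSplitAt_symm_apply]
  have h2 : ∀ (b b' : β) (g : {j // j ≠ u} → β),
      Function.update (e.symm (b, g)) u b' = e.symm (b', g) := by
    intro b b' g; funext j
    by_cases hj : j = u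
    · subst hj; simp [he, Equiv.funSplitAt_symm_apply]
    · simp [Function.update, hj, he, Equiv.funSplitAt_symm_apply]
  have key : ∀ (b b' : β) (g : {j // j ≠ u} → β) (c : β),
      F (e.symm (b, g)) c = F (e.symm (b', g)) c := by
    intro b b' g c
    rw [← h2 b' b g, hF]
  have sum1 : ∑ f : α → β, F f (f u)
      = ∑ b : β, ∑ g : {j // j ≠ u} → β, F (e.symm (b, g)) b := by
    rw [← Equiv.sum_comp e.symm (fun f => F f (f u)), Fintype.sum_prod_type]
    exact Finset.sum_congr rfl fun b _ => Finset.sum_congr rfl fun g _ => by rw [h1]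
  have sum2 : (∑ f : α → β, ∑ b : β, F f b)
      = ∑ b' : β, ∑ g : {j // j ≠ u} → β, ∑ b : β, F (e.symm (b', g)) b := by
    rw [← Equiv.sum_comp e.symm (fun f => ∑ b : β, F f b), Fintype.sum_prod_type]
  rw [sum1, sum2]
  have sum3 : ∀ b' : β, (∑ g : {j // j ≠ u} → β, ∑ b : β, F (e.symm (b', g)) b)
      = ∑ g : {j // j ≠ u} → β, ∑ b : β, F (e.symm (b, g)) b :=
    fun b' => Finset.sum_congr rfl fun g _ => Finset.sum_congr rfl fun b _ => key b' b g b
  rw [Finset.sum_congr rfl (fun b' _ => sum3 b')]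
  rw [Finset.sum_const, smul_eq_mul, Finset.card_univ]
  congr 1
  exact Finset.sum_comm

private noncomputable def cnt (G : SimpleGraph β) [DecidableRel G.Adj]
    (s : Finset α) (r : α) (par : α → α) (w : α) (k : ℕ) : ℕ :=
  ∑ f : α → β, if (∀ a ∈ s, a ≠ r → G.Adj (f (par a)) (f a))
    then (G.degree (f w)) ^ k else 0

private lemma sum_ite_adj (G : SimpleGraph β) [DecidableRel G.Adj] (v : β) (D : ℕ) :
    (∑ b : β, if G.Adj v b then D else 0) = G.degree v * D := by
  rw [Finset.sum_ite, Finset.sum_const, Finset.sum_const_zero, add_zero, smul_eq_mul]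
  congr 1
  rw [← SimpleGraph.card_neighborFinset_eq_degree, SimpleGraph.neighborFinset_eq_filter]

private lemma step_eq (G : SimpleGraph β) [DecidableRel G.Adj]
    (s : Finset α) (r ρ : α) (par : α → α) (w x u : α) (k : ℕ)
    (hwu : w ≠ u) (hxu : x ≠ u)
    (hInv : ∀ a ∈ s.erase u, a ≠ ρ → par a ≠ u)
    (hCiff : ∀ f : α → β, ((∀ a ∈ s, a ≠ r → G.Adj (f (par a)) (f a)) ↔
        ((∀ a ∈ s.erase u, a ≠ ρ → G.Adj (f (par a)) (f a)) ∧ G.Adj (f x) (f u)))) :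
    Fintype.card β * cnt G s r par w k
      = ∑ f : α → β, if (∀ a ∈ s.erase u, a ≠ ρ → G.Adj (f (par a)) (f a))
          then G.degree (f x) * G.degree (f w) ^ k else 0 := by
  have hF : ∀ (f : α → β) (b c : β),
      (fun (f : α → β) (b : β) =>
        if ((∀ a ∈ s.erase u, a ≠ ρ → G.Adj (f (par a)) (f a)) ∧ G.Adj (f x) b)
          then (G.degree (f w))^k else 0) (Function.update f u b) c
      = (fun (f : α → β) (b : β) =>
        if ((∀ a ∈ s.erase u, a ≠ ρ → G.Adj (f (par a)) (f a)) ∧ G.Adj (f x) b)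
          then (G.degree (f w))^k else 0) f c := by
    intro f b c
    dsimp only
    have hupd : ∀ y : α, y ≠ u → Function.update f u b y = f y :=
      fun y hy => Function.update_of_ne hy _ _
    refine if_congr (and_congr ?_ ?_) (by rw [hupd w hwu]) rfl
    · constructor
      · intro hC a ha hne
        have := hC a ha hne
        rwa [hupd _ (hInv a ha hne), hupd _ (Finset.mem_erase.mp ha).1] at this
      · intro hC a ha hne
        have := hC a ha hne
        rwa [hupd _ (hInv a ha hne), hupd _ (Finset.mem_erase.mp ha).1]
    · rw [hupd x hxu]
  have main := coord u (fun (f : α → β) (b : β) =>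
      if ((∀ a ∈ s.erase u, a ≠ ρ → G.Adj (f (par a)) (f a)) ∧ G.Adj (f x) b)
        then (G.degree (f w))^k else 0) hF
  have lhs_eq : (∑ f : α → β,
      if ((∀ a ∈ s.erase u, a ≠ ρ → G.Adj (f (par a)) (f a)) ∧ G.Adj (f x) (f u))
        then (G.degree (f w))^k else 0) = cnt G s r par w k := by
    unfold cnt
    exact Finset.sum_congr rfl fun f _ => if_congr (hCiff f).symm rfl rfl
  rw [lhs_eq] at main
  rw [main]
  refine Finset.sum_congr rfl fun f _ => ?_
  by_cases hC : (∀ a ∈ s.erase u, a ≠ ρ → G.Adj (f (par a)) (f a))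
  · rw [if_pos hC]
    rw [Finset.sum_congr rfl fun b _ =>
      (if_congr (show ((∀ a ∈ s.erase u, a ≠ ρ → G.Adj (f (par a)) (f a)) ∧ G.Adj (f x) b)
          ↔ G.Adj (f x) b from ⟨fun h2 => h2.2, fun h2 => ⟨hC, h2⟩⟩) rfl rfl :
        (if ((∀ a ∈ s.erase u, a ≠ ρ → G.Adj (f (par a)) (f a)) ∧ G.Adj (f x) b)
          then (G.degree (f w))^k else 0) = _)]
    exact sum_ite_adj G (f x) _
  · rw [if_neg hC]
    exact Finset.sum_eq_zero fun b _ => if_neg fun hand => hC hand.1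

private lemma key (G : SimpleGraph β) [DecidableRel G.Adj] (hβ : Nonempty β) :
    ∀ (n : ℕ) (s : Finset α) (r : α), s.card = n → r ∈ s →
      ∀ (par : α → α) (depth : α → ℕ),
        (∀ a ∈ s, a ≠ r → par a ∈ s ∧ depth (par a) < depth a) →
        ∀ w ∈ s, ∀ k : ℕ,
          cnt G s r par w k ≤
            Fintype.card β ^ (Fintype.card α - s.card) *
              ∑ v : β, G.degree v ^ (s.card - 1 + k) := by
  intro n
  induction n with
  | zero =>
    intro s r hc hr
    exact absurd (Finset.card_eq_zero.mp hc ▸ hr) (Finset.notMem_empty r)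
  | succ n ih =>
    intro s r hc hr par depth hstr w hw k
    have hβpos : 0 < Fintype.card β := Fintype.card_pos
    have hαcard : s.card ≤ Fintype.card α := by
      rw [← Finset.card_univ]; exact Finset.card_le_card (Finset.subset_univ s)
    rcases Nat.eq_zero_or_pos n with hn | hn
    · -- base case : s.card = 1
      subst hn
      have h1 : s.card ≤ 1 := by omega
      have hwr : w = r := Finset.card_le_one.mp h1 w hw r hr
      have hα1 : Fintype.card α - 1 + 1 = Fintype.card α := by omega
      have hcnt : cnt G s r par w k = ∑ f : α → β, (G.degree (f r)) ^ k := by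
        unfold cnt
        refine Finset.sum_congr rfl fun f _ => ?_
        rw [hwr, if_pos]
        intro a ha hne
        exact absurd (Finset.card_le_one.mp h1 a ha r hr) hne
      have hco := coord (β := β) r (fun _ b => (G.degree b) ^ k) (fun _ _ _ => rfl)
      have hconst : (∑ f : α → β, ∑ b : β, (G.degree b) ^ k)
          = Fintype.card β ^ Fintype.card α * ∑ b : β, (G.degree b) ^ k := by
        rw [Finset.sum_const, Finset.card_univ, smul_eq_mul, Fintype.card_fun]
      have hkey : Fintype.card β * cnt G s r par w k
          = Fintype.card β * (Fintype.card β ^ (Fintype.card α - 1) * ∑ b : β, (G.degree b) ^ k) := by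
        rw [hcnt, hco, hconst, ← mul_assoc, ← pow_succ', hα1]
      have := Nat.eq_of_mul_eq_mul_left hβpos hkey
      rw [this, hc]
      simp
    · -- inductive step : 2 ≤ s.card
      have hs2 : 2 ≤ s.card := by omega
      -- children set
      set Ch := (s.erase r).image par with hCh
      have herne : (s.erase r).Nonempty := by
        rw [← Finset.card_pos, Finset.card_erase_of_mem hr]; omega
      obtain ⟨a₀, ha₀s, ha₀min⟩ := Finset.exists_min_image (s.erase r) depth herne
      have ha₀ := Finset.mem_erase.mp ha₀s
      have hpa₀ : par a₀ = r := by
        by_contra hne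
        obtain ⟨hmem, hlt⟩ := hstr a₀ ha₀.2 ha₀.1
        have hmem' : par a₀ ∈ s.erase r := Finset.mem_erase.mpr ⟨hne, hmem⟩
        exact absurd (ha₀min _ hmem') (not_le.mpr hlt)
      have hrCh : r ∈ Ch := Finset.mem_image.mpr ⟨a₀, ha₀s, hpa₀⟩
      obtain ⟨m, hms, hmmax⟩ := Finset.exists_max_image s depth ⟨r, hr⟩
      have hmCh : m ∉ Ch := by
        intro hm
        obtain ⟨a, has, hpa⟩ := Finset.mem_image.mp hm
        have ha' := Finset.mem_erase.mp has
        have hlt := (hstr a ha'.2 ha'.1).2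
        rw [hpa] at hlt
        exact absurd (hmmax a ha'.2) (not_le.mpr hlt)
      -- produce the vertex to delete
      obtain ⟨u, x, ρ, hus, hwu, hxu, hρ', hw', hx', hstr', hInv, hCiff⟩ :
          ∃ u x ρ : α, u ∈ s ∧ w ≠ u ∧ x ≠ u ∧ ρ ∈ s.erase u ∧ w ∈ s.erase u ∧ x ∈ s.erase u ∧
            (∀ a ∈ s.erase u, a ≠ ρ → par a ∈ s.erase u ∧ depth (par a) < depth a) ∧
            (∀ a ∈ s.erase u, a ≠ ρ → par a ≠ u) ∧
            (∀ f : α → β, ((∀ a ∈ s, a ≠ r → G.Adj (f (par a)) (f a)) ↔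
              ((∀ a ∈ s.erase u, a ≠ ρ → G.Adj (f (par a)) (f a)) ∧ G.Adj (f x) (f u)))) := by
        by_cases hcase : ∃ u ∈ s, u ∉ Ch ∧ u ≠ w
        · obtain ⟨u, hus, huCh, huw⟩ := hcase
          have hur : u ≠ r := fun h => huCh (h ▸ hrCh)
          obtain ⟨hxs, hdep⟩ := hstr u hus hur
          have hxune : par u ≠ u := fun h => absurd hdep (by rw [h]; exact lt_irrefl _)
          have hInv : ∀ a ∈ s.erase u, a ≠ r → par a ≠ u := by
            intro a ha hne hpar
            exact huCh (Finset.mem_image.mpr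
              ⟨a, Finset.mem_erase.mpr ⟨hne, (Finset.mem_erase.mp ha).2⟩, hpar⟩)
          refine ⟨u, par u, r, hus, huw.symm, hxune, ?_, ?_, ?_, ?_, hInv, ?_⟩
          · exact Finset.mem_erase.mpr ⟨hur.symm, hr⟩
          · exact Finset.mem_erase.mpr ⟨huw.symm, hw⟩
          · exact Finset.mem_erase.mpr ⟨hxune, hxs⟩
          · intro a ha hne
            obtain ⟨h1, h2⟩ := hstr a (Finset.mem_erase.mp ha).2 hne
            exact ⟨Finset.mem_erase.mpr ⟨hInv a ha hne, h1⟩, h2⟩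
          · intro f
            constructor
            · intro hC
              exact ⟨fun a ha hne => hC a (Finset.mem_erase.mp ha).2 hne, hC u hus hur⟩
            · rintro ⟨h1, h2⟩ a ha hne
              by_cases hau : a = u
              · subst hau; exact h2
              · exact h1 a (Finset.mem_erase.mpr ⟨hau, ha⟩) hne
        · -- all childless vertices equal w ; delete the root
          push_neg at hcase
          have hwm : m = w := hcase m hms hmCh
          have hwCh : w ∉ Ch := hwm ▸ hmCh
          have hwr : w ≠ r := fun h => hwCh (h ▸ hrCh)
          -- injectivity of par on s.erase r
          have hsub : s.erase w ⊆ Ch := by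
            intro a ha
            have ha' := Finset.mem_erase.mp ha
            by_contra hnotin
            exact ha'.1 (hcase a ha'.2 hnotin)
          have hcards : Ch.card = (s.erase r).card := by
            have h1 : Ch.card ≤ (s.erase r).card := Finset.card_image_le
            have h2 : (s.erase w).card ≤ Ch.card := Finset.card_le_card hsub
            rw [Finset.card_erase_of_mem hw] at h2
            rw [Finset.card_erase_of_mem hr] at h1 ⊢
            omega
          have hinj : Set.InjOn par (s.erase r) := Finset.injOn_of_card_image_eq hcards
          have huniq : ∀ a ∈ s.erase r, par a = r → a = a₀ := by
            intro a ha hpa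
            exact hinj ha ha₀s (by rw [hpa, hpa₀])
          have hInv : ∀ a ∈ s.erase r, a ≠ a₀ → par a ≠ r :=
            fun a ha hne hpa => hne (huniq a ha hpa)
          refine ⟨r, a₀, a₀, hr, hwr, ha₀.1, ha₀s, Finset.mem_erase.mpr ⟨hwr, hw⟩, ha₀s,
            ?_, hInv, ?_⟩
          · intro a ha hne
            obtain ⟨h1, h2⟩ := hstr a (Finset.mem_erase.mp ha).2 (Finset.mem_erase.mp ha).1
            exact ⟨Finset.mem_erase.mpr ⟨hInv a ha hne, h1⟩, h2⟩
          · intro f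
            constructor
            · intro hC
              refine ⟨fun a ha hne => hC a (Finset.mem_erase.mp ha).2 (Finset.mem_erase.mp ha).1, ?_⟩
              have := hC a₀ ha₀.2 ha₀.1
              rw [hpa₀] at this
              exact this.symm
            · rintro ⟨h1, h2⟩ a ha hne
              by_cases haa : a = a₀
              · subst haa; rw [hpa₀]; exact h2.symm
              · exact h1 a (Finset.mem_erase.mpr ⟨hne, ha⟩) haa
      -- counting identity for the deletion
      have hs'c : (s.erase u).card = n := by
        rw [Finset.card_erase_of_mem hus, hc]
        omega
      have hexp : n - 1 + (k+1) = n + k := by omega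
      have hα1 : Fintype.card α - (n+1) + 1 = Fintype.card α - n := by omega
      have hfin1 : n + 1 - 1 + k = n + k := by omega
      have hk1 : 0 < k + 1 := Nat.succ_pos k
      have hB := step_eq G s r ρ par w x u k hwu hxu hInv hCiff
      have hρs := hρ'
      -- pointwise AM-GM then sum
      have hsum : (k+1) * (Fintype.card β * cnt G s r par w k)
          ≤ k * cnt G (s.erase u) ρ par w (k+1) + cnt G (s.erase u) ρ par x (k+1) := by
        rw [hB, Finset.mul_sum]
        unfold cnt
        rw [Finset.mul_sum, ← Finset.sum_add_distrib]
        refine Finset.sum_le_sum fun f _ => ?_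
        by_cases hC : (∀ a ∈ s.erase u, a ≠ ρ → G.Adj (f (par a)) (f a))
        · rw [if_pos hC, if_pos hC, if_pos hC]
          calc (k+1) * (G.degree (f x) * G.degree (f w) ^ k)
              = (k+1) * (G.degree (f w) ^ k * G.degree (f x)) := by ring
            _ ≤ k * G.degree (f w) ^ (k+1) + G.degree (f x) ^ (k+1) :=
              amgm_nat (G.degree (f w)) (G.degree (f x)) k
        · rw [if_neg hC, if_neg hC, if_neg hC]
          simp
      have hIH1 := ih (s.erase u) ρ hs'c hρs par depth hstr' w hw' (k+1)
      have hIH2 := ih (s.erase u) ρ hs'c hρs par depth hstr' x hx' (k+1)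
      rw [hs'c] at hIH1 hIH2
      rw [hexp] at hIH1 hIH2
      set T := ∑ v : β, G.degree v ^ (n + k) with hT
      set R := Fintype.card β ^ (Fintype.card α - n) * T with hR
      have htot : (k+1) * (Fintype.card β * cnt G s r par w k) ≤ (k+1) * R := by
        calc (k+1) * (Fintype.card β * cnt G s r par w k)
            ≤ k * cnt G (s.erase u) ρ par w (k+1) + cnt G (s.erase u) ρ par x (k+1) := hsum
          _ ≤ k * R + R := Nat.add_le_add (Nat.mul_le_mul_left k hIH1) hIH2
          _ = (k+1) * R := by ring
      have hmid : Fintype.card β * cnt G s r par w k ≤ R := Nat.le_of_mul_le_mul_left htot hk1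
      have hReq : R = Fintype.card β * (Fintype.card β ^ (Fintype.card α - (n+1)) * T) := by
        rw [hR, ← mul_assoc, ← pow_succ', hα1]
      rw [hReq] at hmid
      have hfin := Nat.le_of_mul_le_mul_left hmid hβpos
      rw [hc, hfin1]
      exact hfin

end SidorenkoAux


/-- Sidorenko's inequality: for a connected graph `H` on `h` vertices and any finite
graph `G`, the number of homomorphisms from `H` to `G` is at most
`∑_{v ∈ V(G)} d_G(v)^(h-1)`, which equals `hom(K_{1,h-1}, G)`. -/
theorem sidorenko_hom_le {α β : Type*} [Fintype α] [Fintype β]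
    (H : SimpleGraph α) (G : SimpleGraph β) [DecidableRel G.Adj]
    (h : ℕ) (hh : 2 ≤ h) (hcard : Fintype.card α = h) (hconn : H.Connected) :
    Nat.card {f : α → β // ∀ a b : α, H.Adj a b → G.Adj (f a) (f b)}
      ≤ ∑ v : β, (G.degree v) ^ (h - 1) := by
  classical
  have hα : Nonempty α := Fintype.card_pos_iff.mp (by rw [hcard]; omega)
  cases isEmpty_or_nonempty β with
  | inl hempty =>
    have hem : IsEmpty (α → β) := ⟨fun f => hempty.false (f (Classical.arbitrary α))⟩
    have hem2 : IsEmpty {f : α → β // ∀ a b : α, H.Adj a b → G.Adj (f a) (f b)} :=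
      ⟨fun p => hem.false p.1⟩
    rw [Nat.card_of_isEmpty]
    exact Nat.zero_le _
  | inr hβ =>
    obtain ⟨r⟩ := hα
    have hstepex : ∀ a : α, a ≠ r → ∃ b, H.Adj b a ∧ H.dist r b < H.dist r a := by
      intro a hne
      obtain ⟨p, hp⟩ := hconn.exists_walk_length_eq_dist r a
      obtain ⟨b, hadj, q, hq⟩ := SimpleGraph.Walk.exists_eq_cons_of_ne hne p.reverse
      refine ⟨b, hadj.symm, ?_⟩
      have h1 : H.dist r b ≤ q.reverse.length := SimpleGraph.dist_le q.reverse
      rw [SimpleGraph.Walk.length_reverse] at h1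
      have h2 : p.reverse.length = q.length + 1 := by
        rw [hq, SimpleGraph.Walk.length_cons]
      rw [SimpleGraph.Walk.length_reverse] at h2
      omega
    obtain ⟨par, hparprop⟩ : ∃ par : α → α, ∀ a : α, a ≠ r →
        H.Adj (par a) a ∧ H.dist r (par a) < H.dist r a := by
      refine ⟨fun a => if hne : a ≠ r then (hstepex a hne).choose else r, fun a hne => ?_⟩
      simp only [dif_pos hne]
      exact (hstepex a hne).choose_spec
    have hstr : ∀ a ∈ (univ : Finset α), a ≠ r →
        par a ∈ (univ : Finset α) ∧ H.dist r (par a) < H.dist r a :=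
      fun a _ hne => ⟨mem_univ _, (hparprop a hne).2⟩
    have hexp0 : Fintype.card α - Fintype.card α = 0 := by omega
    have hexp1 : Fintype.card α - 1 + 0 = h - 1 := by omega
    have hkey := key G hβ (Fintype.card α) univ r (by rw [card_univ]) (mem_univ r)
      par (H.dist r) hstr r (mem_univ r) 0
    rw [card_univ, hexp0, hexp1, pow_zero, one_mul] at hkey
    have hNat : Nat.card {f : α → β // ∀ a b : α, H.Adj a b → G.Adj (f a) (f b)}
        = (univ.filter (fun f : α → β => ∀ a b : α, H.Adj a b → G.Adj (f a) (f b))).card := by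
      rw [Nat.card_eq_fintype_card, Fintype.card_subtype]
    have hmono : (univ.filter (fun f : α → β => ∀ a b : α, H.Adj a b → G.Adj (f a) (f b))).card
        ≤ (univ.filter (fun f : α → β => ∀ a ∈ (univ : Finset α), a ≠ r →
            G.Adj (f (par a)) (f a))).card := by
      refine Finset.card_le_card ?_
      intro f hf
      rw [Finset.mem_filter] at hf ⊢
      exact ⟨hf.1, fun a _ hne => hf.2 _ _ ((hparprop a hne).1)⟩
    have hcnt0 : cnt G univ r par r 0
        = (univ.filter (fun f : α → β => ∀ a ∈ (univ : Finset α), a ≠ r →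
            G.Adj (f (par a)) (f a))).card := by
      unfold cnt
      simp only [pow_zero]
      rw [Finset.sum_boole]
      simp
    rw [hNat]
    calc (univ.filter (fun f : α → β => ∀ a b : α, H.Adj a b → G.Adj (f a) (f b))).card
        ≤ (univ.filter (fun f : α → β => ∀ a ∈ (univ : Finset α), a ≠ r →
            G.Adj (f (par a)) (f a))).card := hmono
      _ = cnt G univ r par r 0 := hcnt0.symm
      _ ≤ ∑ v : β, (G.degree v) ^ (h - 1) := hkey
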